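/- For the polynomial W(x,y) = x^{4m+4}y^{4m+4}(x⁴−y⁴)^{4m−1}(x⁴+y⁴)(x⁸−34x⁴y⁴+y⁸) with m ≥ 1, the coefficient of x^{12m+8}y^{12m+8} is zero, and every other coefficient of x^i y^{24m+16−i} with i ≡ 0 (mod 4), 4m+4 ≤ i ≤ 20m+12, and i ≠ 12m+8 is nonzero. -/

import Mathlib

/-!
`W` is homogeneous of degree `N = 24m + 16` and changes sign under `x ↔ y`, because
`(x⁴ - y⁴)^(4m-1)` is an odd power and the other factors are symmetric. So the coefficients of
`x^i y^(N-i)` and `x^(N-i) y^i` are opposite, and the central one vanishes.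

Dehomogenising, `W(x, 1) = x^(4m+4) G(-x⁴)` with `G = (X + 1)^n (X³ + 33X² - 33X - 1)` and
`n = 4m - 1`. The coefficient of `x^(4m+4+4j)` is therefore `(-1)^j` times
`[C(n, j-3) - C(n, j)] + 33 [C(n, j-2) - C(n, j-1)]` (binomials at negative indices being `0`),
which is negative for `j ≤ 2m` since `C(n, a) < C(n, b)` whenever `a < b` and `a + b < n`.
-/

open MvPolynomial

noncomputable abbrev Wpoly (m : ℕ) : MvPolynomial (Fin 2) ℚ :=
  (X 0)^(4 * m + 4) * (X 1)^(4 * m + 4) * ((X 0)^4 - (X 1)^4)^(4 * m - 1)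
    * ((X 0)^4 + (X 1)^4) * ((X 0)^8 - 34 * (X 0)^4 * (X 1)^4 + (X 1)^8)

namespace Nat

theorem choose_lt_choose_succ {n r : ℕ} (h : 2 * r + 2 ≤ n) : n.choose r < n.choose (r + 1) := by
  have hpos : 0 < n.choose r := choose_pos (by omega)
  refine Nat.lt_of_mul_lt_mul_right (a := r + 1) ?_
  rw [choose_succ_right_eq]
  exact Nat.mul_lt_mul_of_pos_left (by omega) hpos

theorem choose_le_choose_of_add_le {n a b : ℕ} (hab : a ≤ b) (h : a + b ≤ n) :
    n.choose a ≤ n.choose b := by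
  induction hab using decreasingInduction with
  | self => rfl
  | of_succ k hk ih =>
    rcases h.eq_or_lt with h | h
    · rw [← choose_symm (show k ≤ n by omega), show n - k = b by omega]
    · exact (choose_lt_choose_succ (by omega)).le.trans (ih (by omega))

theorem choose_lt_choose_of_add_lt {n a b : ℕ} (hab : a < b) (h : a + b < n) :
    n.choose a < n.choose b :=
  (choose_lt_choose_succ (by omega)).trans_le (choose_le_choose_of_add_le hab (by omega))

end Nat

namespace Polynomial

variable {R : Type*}

lemma coeff_comp_neg_X [CommRing R] (p : R[X]) (k : ℕ) :
    (p.comp (-X)).coeff k = (-1) ^ k * p.coeff k := by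
  induction p using Polynomial.induction_on' with
  | add p q hp hq => simp only [add_comp, coeff_add, hp, hq, mul_add]
  | monomial n a =>
    rw [monomial_comp, neg_pow, ← mul_assoc, ← C_1, ← C_neg, ← C_pow, ← C_mul, coeff_C_mul_X_pow,
      coeff_monomial]
    obtain rfl | h := eq_or_ne k n
    · simp only [if_true]; ring
    · simp only [h, h.symm, if_false, mul_zero]

lemma coeff_X_add_one_pow_mul_X_pow [Semiring R] (n d j : ℕ) :
    ((X + 1) ^ n * X ^ d : R[X]).coeff j = if d ≤ j then (n.choose (j - d) : R) else 0 := by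
  rw [coeff_mul_X_pow', coeff_X_add_one_pow]

lemma coeff_X_add_one_pow_mul_X_pow_le [Semiring R] [PartialOrder R] [IsOrderedRing R]
    {n d e j : ℕ} (hde : d ≤ e) (h : 2 * j ≤ n + d + e) :
    ((X + 1) ^ n * X ^ e : R[X]).coeff j ≤ ((X + 1) ^ n * X ^ d : R[X]).coeff j := by
  rw [coeff_X_add_one_pow_mul_X_pow, coeff_X_add_one_pow_mul_X_pow]
  split_ifs with he hd
  · exact Nat.mono_cast (Nat.choose_le_choose_of_add_le (by omega) (by omega))
  · omega
  · positivity
  · rfl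

lemma coeff_X_add_one_pow_mul_X_pow_lt [Semiring R] [PartialOrder R] [IsStrictOrderedRing R]
    {n d e j : ℕ} (hde : d < e) (hdj : d ≤ j) (hjn : j ≤ n + d) (h : 2 * j < n + d + e) :
    ((X + 1) ^ n * X ^ e : R[X]).coeff j < ((X + 1) ^ n * X ^ d : R[X]).coeff j := by
  rw [coeff_X_add_one_pow_mul_X_pow, coeff_X_add_one_pow_mul_X_pow, if_pos hdj]
  split_ifs with he
  · exact_mod_cast Nat.choose_lt_choose_of_add_lt (by omega) (by omega)
  · exact_mod_cast Nat.choose_pos (by omega)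

end Polynomial

namespace MvPolynomial

lemma coeff_single_add_single_eq_neg_of_rename_swap {R : Type*} [CommRing R]
    {p : MvPolynomial (Fin 2) R} (hp : rename (Equiv.swap 0 1) p = -p) (a b : ℕ) :
    coeff (Finsupp.single 0 a + Finsupp.single 1 b) p
      = -coeff (Finsupp.single 0 b + Finsupp.single 1 a) p := by
  have := coeff_rename_mapDomain _ (Equiv.swap (0 : Fin 2) 1).injective p
    (Finsupp.single 0 b + Finsupp.single 1 a)
  rw [hp, coeff_neg, Finsupp.mapDomain_add, Finsupp.mapDomain_single, Finsupp.mapDomain_single,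
    Equiv.swap_apply_left, Equiv.swap_apply_right, add_comm] at this
  rw [← this, neg_neg]

end MvPolynomial

open scoped Polynomial

namespace Wpoly

noncomputable def coeffPoly (m : ℕ) : ℚ[X] :=
  (Polynomial.X + 1) ^ (4 * m - 1)
    * (Polynomial.X ^ 3 + 33 * Polynomial.X ^ 2 - 33 * Polynomial.X - 1)

lemma coeff_coeffPoly_neg {m j : ℕ} (hm : 1 ≤ m) (hj : j ≤ 2 * m) :
    (coeffPoly m).coeff j < 0 := by
  set A : ℚ[X] := (Polynomial.X + 1) ^ (4 * m - 1)
  have h30 : (A * Polynomial.X ^ 3).coeff j < (A * Polynomial.X ^ 0).coeff j :=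
    Polynomial.coeff_X_add_one_pow_mul_X_pow_lt (by omega) (by omega) (by omega) (by omega)
  have h21 : (A * Polynomial.X ^ 2).coeff j ≤ (A * Polynomial.X ^ 1).coeff j :=
    Polynomial.coeff_X_add_one_pow_mul_X_pow_le (by omega) (by omega)
  have : coeffPoly m = A * Polynomial.X ^ 3 + 33 * (A * Polynomial.X ^ 2)
      - 33 * (A * Polynomial.X ^ 1) - A * Polynomial.X ^ 0 := by
    rw [coeffPoly]; ring
  rw [this, Polynomial.coeff_sub, Polynomial.coeff_sub, Polynomial.coeff_add,
    Polynomial.coeff_ofNat_mul, Polynomial.coeff_ofNat_mul]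
  linarith

lemma isHomogeneous (m : ℕ) (hm : 1 ≤ m) : (Wpoly m).IsHomogeneous (24 * m + 16) := by
  have h4 (i : Fin 2) : (X i ^ 4 : MvPolynomial (Fin 2) ℚ).IsHomogeneous 4 :=
    isHomogeneous_X_pow i 4
  have h34 : (34 * X 0 ^ 4 * X 1 ^ 4 : MvPolynomial (Fin 2) ℚ).IsHomogeneous (0 + 4 + 4) := by
    rw [← map_ofNat MvPolynomial.C]; exact ((isHomogeneous_C _ _).mul (h4 0)).mul (h4 1)
  rw [show 24 * m + 16 = 4 * m + 4 + (4 * m + 4) + 4 * (4 * m - 1) + 4 + 8 by omega]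
  exact ((((isHomogeneous_X_pow 0 _).mul (isHomogeneous_X_pow 1 _)).mul
    (((h4 0).sub (h4 1)).pow _)).mul ((h4 0).add (h4 1))).mul
    (((isHomogeneous_X_pow 0 8).sub h34).add (isHomogeneous_X_pow 1 8))

lemma rename_swap (m : ℕ) (hm : 1 ≤ m) : rename (Equiv.swap 0 1) (Wpoly m) = -Wpoly m := by
  have hodd : Odd (4 * m - 1) := ⟨2 * m - 1, by omega⟩
  simp only [Wpoly, map_mul, map_pow, map_sub, map_add, rename_X, Equiv.swap_apply_left,
    Equiv.swap_apply_right, map_ofNat]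
  rw [← neg_sub, hodd.neg_pow]
  ring

lemma aeval_X_one (m : ℕ) (hm : 1 ≤ m) :
    aeval ![Polynomial.X, 1] (Wpoly m)
      = Polynomial.X ^ (4 * m + 4)
        * Polynomial.expand ℚ 4 ((coeffPoly m).comp (-Polynomial.X)) := by
  have hodd : Odd (4 * m - 1) := ⟨2 * m - 1, by omega⟩
  simp only [Wpoly, coeffPoly, map_mul, map_pow, map_sub, map_add, aeval_X, map_ofNat,
    Matrix.cons_val_zero, Matrix.cons_val_one, Polynomial.mul_comp, Polynomial.pow_comp,
    Polynomial.add_comp, Polynomial.sub_comp, Polynomial.X_comp, Polynomial.one_comp,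
    Polynomial.ofNat_comp, Polynomial.expand_X, map_neg, map_one, map_natCast]
  rw [show -(Polynomial.X : ℚ[X]) ^ 4 + 1 = -(Polynomial.X ^ 4 - 1) by ring, hodd.neg_pow]
  ring

lemma eq_homogenize (m : ℕ) (hm : 1 ≤ m) :
    Wpoly m = (Polynomial.X ^ (4 * m + 4)
      * Polynomial.expand ℚ 4 ((coeffPoly m).comp (-Polynomial.X))).homogenize (24 * m + 16) :=
  (Polynomial.homogenize_eq_of_isHomogeneous (isHomogeneous m hm) (aeval_X_one m hm)).symm

lemma coeff_single_add_single (m : ℕ) (hm : 1 ≤ m) {j : ℕ} (hj : 4 * j ≤ 20 * m + 12) :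
    coeff (Finsupp.single 0 (4 * m + 4 + 4 * j) + Finsupp.single 1 (20 * m + 12 - 4 * j))
        (Wpoly m) = (-1) ^ j * (coeffPoly m).coeff j := by
  rw [eq_homogenize m hm, Polynomial.coeff_homogenize]
  simp only [Finsupp.add_apply, Finsupp.single_eq_same, Finsupp.single_eq_of_ne zero_ne_one,
    Finsupp.single_eq_of_ne one_ne_zero, add_zero, zero_add]
  rw [if_pos (by omega), Polynomial.coeff_X_pow_mul', if_pos (by omega), Nat.add_sub_cancel_left,
    Polynomial.coeff_expand_mul' four_pos, Polynomial.coeff_comp_neg_X]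

end Wpoly

theorem stmt_19 (m : ℕ) (hm : 1 ≤ m) :
    MvPolynomial.coeff
      (Finsupp.single (0 : Fin 2) (12 * m + 8) + Finsupp.single (1 : Fin 2) (12 * m + 8))
      (Wpoly m) = 0 ∧
    ∀ i : ℕ, i % 4 = 0 → 4 * m + 4 ≤ i → i ≤ 20 * m + 12 → i ≠ 12 * m + 8 →
      MvPolynomial.coeff
        (Finsupp.single (0 : Fin 2) i + Finsupp.single (1 : Fin 2) (24 * m + 16 - i))
        (Wpoly m) ≠ 0 := by
  have hanti := coeff_single_add_single_eq_neg_of_rename_swap (Wpoly.rename_swap m hm)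
  have hlow {i : ℕ} (hi4 : i % 4 = 0) (hlo : 4 * m + 4 ≤ i) (hhi : i < 12 * m + 8) :
      coeff (Finsupp.single 0 i + Finsupp.single 1 (24 * m + 16 - i)) (Wpoly m) ≠ 0 := by
    obtain ⟨j, rfl⟩ : ∃ j, i = 4 * m + 4 + 4 * j := ⟨(i - (4 * m + 4)) / 4, by omega⟩
    rw [show 24 * m + 16 - (4 * m + 4 + 4 * j) = 20 * m + 12 - 4 * j by omega,
      Wpoly.coeff_single_add_single m hm (by omega)]
    exact mul_ne_zero (pow_ne_zero _ (by norm_num)) (Wpoly.coeff_coeffPoly_neg hm (by omega)).ne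
  refine ⟨self_eq_neg.mp (hanti _ _), fun i hi4 hlo hhi hne => ?_⟩
  rcases hne.lt_or_gt with hlt | hgt
  · exact hlow hi4 hlo hlt
  · have hmirror := hlow (i := 24 * m + 16 - i) (by omega) (by omega) (by omega)
    rw [show 24 * m + 16 - (24 * m + 16 - i) = i by omega] at hmirror
    rwa [hanti, neg_ne_zero]
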